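/- Let p(z) = dz + 1 − g be an admissible polynomial (equivalently, d ≥ 1 and g ≤ (d−1)(d−2)/2). Then for every n ≥ 2 there exists a saturated Borel ideal I ⊆ K[x_0,…,x_n] which is a gen-segment ideal with respect to the revlex order and whose Hilbert polynomial is p(z). -/

import Mathlib

open Polynomial

/-- Exponent vectors of monomials (terms) of `S = K[x_0, …, x_n]`. -/
abbrev Expo (n : ℕ) := Fin (n + 1) → ℕ

/-- The degree of a term. -/
def deg {n : ℕ} (α : Expo n) : ℕ := ∑ i, α i

/-- The exponent vector of the variable `x_i`. -/
def sing {n : ℕ} (i : Fin (n + 1)) : Expo n := Pi.single i 1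

/-- `MoveDown α β` : the term `α` is obtained from `β` by an elementary move `e_j^-`,
i.e. `α = x_{j-1}·β/x_j` for some `j ≥ 1` with `β_j > 0`. -/
def MoveDown {n : ℕ} (α β : Expo n) : Prop :=
  ∃ j k : Fin (n + 1), (k : ℕ) + 1 = (j : ℕ) ∧ α + sing j = β + sing k

/-- The Borel (partial) order `α <_B β` : transitive closure of elementary moves `e_j^-`. -/
def BorelLt {n : ℕ} (α β : Expo n) : Prop := Relation.TransGen MoveDown α β

/-- A Borel set: a set of terms closed upwards under the Borel order. -/
def IsBorelSet {n : ℕ} (B : Set (Expo n)) : Prop :=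
  ∀ α β : Expo n, α ∈ B → MoveDown α β → β ∈ B

/-- A monomial ideal, identified with its set of terms: closed under multiplication
by arbitrary terms. -/
def IsMonIdeal {n : ℕ} (M : Set (Expo n)) : Prop :=
  ∀ α ∈ M, ∀ γ : Expo n, α + γ ∈ M

/-- A Borel ideal: a monomial ideal which is a Borel set in every degree. -/
def IsBorelIdeal {n : ℕ} (M : Set (Expo n)) : Prop :=
  IsMonIdeal M ∧ IsBorelSet M

/-- `𝒩(M)_t` : the set of degree-`t` terms not lying in `M`. -/
def coIdeal {n : ℕ} (M : Set (Expo n)) (t : ℕ) : Set (Expo n) :=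
  {α | deg α = t ∧ α ∉ M}

/-- `p` is the Hilbert polynomial of `S/M` : `|𝒩(M)_t| = p(t)` for all `t` large. -/
def HasHilbPoly {n : ℕ} (M : Set (Expo n)) (p : Polynomial ℚ) : Prop :=
  ∃ N : ℕ, ∀ t : ℕ, N ≤ t → ((coIdeal M t).ncard : ℚ) = p.eval (t : ℚ)

/-- Saturation for monomial ideals: a term `α` with `x_i^{k_i}·α ∈ M` for suitable
powers of every variable already lies in `M`. -/
def IsSaturatedIdeal {n : ℕ} (M : Set (Expo n)) : Prop :=
  ∀ α : Expo n, (∀ i : Fin (n + 1), ∃ k : ℕ, α + k • sing i ∈ M) → α ∈ M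

/-- A term order on the terms of `S`: a multiplicative (strict) total order with `1`
as least element and `x_0 ≺ x_1 ≺ … ≺ x_n`. -/
structure TermOrder (n : ℕ) where
  lt : Expo n → Expo n → Prop
  irrefl : ∀ a : Expo n, ¬ lt a a
  trans : ∀ a b c : Expo n, lt a b → lt b c → lt a c
  total : ∀ a b : Expo n, a ≠ b → lt a b ∨ lt b a
  add_right : ∀ a b c : Expo n, lt a b → lt (a + c) (b + c)
  zero_lt : ∀ a : Expo n, a ≠ 0 → lt 0 a
  var_lt : ∀ i j : Fin (n + 1), i < j → lt (sing i) (sing j)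

/-- `M ∩ 𝕋_t` is a segment w.r.t. the order `lt`. -/
def IsSegmentAt {n : ℕ} (lt : Expo n → Expo n → Prop) (M : Set (Expo n)) (t : ℕ) : Prop :=
  ∀ τ σ : Expo n, τ ∈ M → deg τ = t → deg σ = t → lt τ σ → σ ∈ M

/-- `M` is a segment ideal w.r.t. the order `lt`. -/
def IsSegmentIdeal {n : ℕ} (lt : Expo n → Expo n → Prop) (M : Set (Expo n)) : Prop :=
  ∀ t : ℕ, IsSegmentAt lt M t

/-- `α` is a minimal monomial generator of the monomial ideal `M`. -/
def IsMinGen {n : ℕ} (M : Set (Expo n)) (α : Expo n) : Prop :=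
  α ∈ M ∧ ∀ β γ : Expo n, β + γ = α → β ∈ M → γ = 0

/-- The ideal generated by the elements of `M` of degree `≤ s - 1`. -/
def genBelow {n : ℕ} (M : Set (Expo n)) (s : ℕ) : Set (Expo n) :=
  {x | ∃ α γ : Expo n, α ∈ M ∧ deg α < s ∧ x = α + γ}

/-- `M` is a gen-segment ideal w.r.t. `lt`: for every `s` the minimal generators of
degree `s` are the greatest among the degree-`s` terms not in `⟨M_{≤ s-1}⟩`. -/
def IsGenSegment {n : ℕ} (lt : Expo n → Expo n → Prop) (M : Set (Expo n)) : Prop :=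
  ∀ α : Expo n, IsMinGen M α → ∀ σ : Expo n, deg σ = deg α →
    σ ∉ genBelow M (deg α) → ¬ IsMinGen M σ → lt σ α

/-- `δ` is the maximal degree of a minimal monomial generator of `M`. -/
def IsMaxGenDeg {n : ℕ} (M : Set (Expo n)) (δ : ℕ) : Prop :=
  (∃ α : Expo n, IsMinGen M α ∧ deg α = δ) ∧ ∀ α : Expo n, IsMinGen M α → deg α ≤ δ

/-- `p` is an admissible polynomial with Gotzmann decomposition of length `r`
(so `r` is its Gotzmann number):
`p(z) = ∑_{i=1}^{r} binom(z + a_i - (i-1), a_i)` with `a_1 ≥ … ≥ a_r ≥ 0`. -/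
def IsGotzmannDecomp (p : Polynomial ℚ) (r : ℕ) : Prop :=
  ∃ a : Fin r → ℕ, Antitone a ∧
    ∀ t : ℕ, r ≤ t →
      p.eval (t : ℚ) = ∑ i : Fin r, ((t + a i - (i : ℕ)).choose (a i) : ℚ)

/-- An admissible polynomial: one admitting a Gotzmann decomposition. -/
def IsAdmissible (p : Polynomial ℚ) : Prop := ∃ r : ℕ, IsGotzmannDecomp p r

/-- Setting `x_0 = x_1 = 1` in a term. -/
def trunc01 {n : ℕ} (α : Expo n) : Expo n := fun i => if (i : ℕ) ≤ 1 then 0 else α i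

/-- The `x_1`-saturation of a monomial ideal: the ideal generated by the minimal
generators with `x_0 = x_1 = 1`. -/
def xOneSat {n : ℕ} (M : Set (Expo n)) : Set (Expo n) :=
  {x | ∃ α γ : Expo n, IsMinGen M α ∧ x = trunc01 α + γ}

/-- The lexicographic comparison (intended for terms of equal degree):
`α ≺_lex β` iff `α_k < β_k` at the largest index `k` where they differ. -/
def LexLt {n : ℕ} (α β : Expo n) : Prop :=
  ∃ k : Fin (n + 1), α k < β k ∧ ∀ j : Fin (n + 1), k < j → α j = β j

/-- The reverse lexicographic comparison (intended for terms of equal degree):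
`α ≺_revlex β` iff `α_h > β_h` at the smallest index `h` where they differ. -/
def RevLexLt {n : ℕ} (α β : Expo n) : Prop :=
  ∃ h : Fin (n + 1), β h < α h ∧ ∀ j : Fin (n + 1), j < h → α j = β j

/-- A graded term order. -/
def IsGraded {n : ℕ} (ord : TermOrder n) : Prop :=
  ∀ α β : Expo n, deg α < deg β → ord.lt α β

/-- A reverse term order: a graded term order such that, on terms of equal degree,
a strictly larger exponent of `x_0` makes a term strictly smaller. -/
def IsReverseOrder {n : ℕ} (ord : TermOrder n) : Prop :=
  IsGraded ord ∧ ∀ α β : Expo n, deg α = deg β → β 0 < α 0 → ord.lt α β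

/-!
Put `B = (d-1)(d-2)/2 - g ≥ 0` and `I = (x_3, …, x_n, x_2^{d+1}, x_1^B x_2^d)`.
Since `x_0` does not occur in the generators, `I` is saturated, and the Borel moves only push
exponents towards larger variables, which keeps every generator condition true. A degree-`t`
term outside `I` is `x_0^{t-j-k} x_1^k x_2^j` with either `j < d`, or `j = d` and `k < B`,
so for `t ≥ d + B` there are `∑_{j<d} (t+1-j) + B = dt + 1 - g` of them. Finally a term `σ`
outside `I` of the same degree as a generator `α` with `α_0 = 0` either contains `x_0` or, when
it does not, has a larger `x_1`-exponent than `α`; either way `σ ≺_revlex α`.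
-/

open Finset

section Terms

variable {n : ℕ}

lemma sing_apply (i j : Fin (n + 1)) : sing i j = if j = i then 1 else 0 :=
  Pi.single_apply i 1 j

lemma deg_add (α β : Expo n) : deg (α + β) = deg α + deg β := by
  simp [deg, sum_add_distrib]

lemma deg_smul (k : ℕ) (α : Expo n) : deg (k • α) = k * deg α := by
  simp [deg, mul_sum]

lemma deg_sing (i : Fin (n + 1)) : deg (sing i) = 1 := by
  simp [deg, sing_apply]

lemma apply_le_deg (α : Expo n) (i : Fin (n + 1)) : α i ≤ deg α :=
  single_le_sum (fun _ _ => Nat.zero_le _) (mem_univ i)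

lemma apply_add_apply_le_deg (α : Expo n) {i j : Fin (n + 1)} (h : i ≠ j) :
    α i + α j ≤ deg α := by
  rw [← sum_pair h, deg]
  exact sum_le_sum_of_subset (subset_univ _)

lemma eq_sing_of_deg_eq_one {σ : Expo n} (h : deg σ = 1) : ∃ l, σ = sing l := by
  obtain ⟨l, hl⟩ : ∃ l, σ l ≠ 0 := by
    by_contra! hzero
    simp [deg, hzero] at h
  refine ⟨l, funext fun i => ?_⟩
  rw [sing_apply]
  split_ifs with hil
  · subst hil
    have := apply_le_deg σ i
    omega
  · have := apply_add_apply_le_deg σ hil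
    omega

lemma MoveDown.exists_index {α β : Expo n} (h : MoveDown α β) :
    ∃ j k : Fin (n + 1),
      (k : ℕ) + 1 = j ∧ β j = α j + 1 ∧ ∀ i, i ≠ k → α i ≤ β i := by
  obtain ⟨j, k, hkj, hmove⟩ := h
  have hjk : j ≠ k := fun h => by subst h; omega
  have hcoord (i : Fin (n + 1)) :
      α i + (if i = j then 1 else 0) = β i + (if i = k then 1 else 0) := by
    simpa [sing_apply] using congrFun hmove i
  refine ⟨j, k, hkj, ?_, fun i hik => ?_⟩
  · simpa [hjk] using (hcoord j).symm
  · have := hcoord i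
    split_ifs at this <;> omega

lemma IsMinGen.eq_of_le {M : Set (Expo n)} {α β : Expo n} (hα : IsMinGen M α) (hβ : β ∈ M)
    (hle : β ≤ α) : α = β :=
  le_antisymm (tsub_eq_zero_iff_le.mp (hα.2 β (α - β) (add_tsub_cancel_of_le hle) hβ)) hle

lemma not_mem_of_not_mem_genBelow {M : Set (Expo n)} {σ : Expo n}
    (hσ : σ ∉ genBelow M (deg σ)) (hmin : ¬ IsMinGen M σ) : σ ∉ M := by
  intro hσM
  obtain ⟨β, γ, hsum, hβ, hγ⟩ : ∃ β γ, β + γ = σ ∧ β ∈ M ∧ γ ≠ 0 := by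
    simpa [IsMinGen, hσM] using hmin
  obtain ⟨i, hi⟩ := Function.ne_iff.mp hγ
  have := apply_le_deg γ i
  refine hσ ⟨β, γ, hβ, ?_, hsum.symm⟩
  rw [← hsum, deg_add]
  simp only [Pi.zero_apply] at hi
  omega

lemma revLexLt_sing {l i : Fin (n + 1)} (h : l < i) : RevLexLt (sing l) (sing i) :=
  ⟨l, by simp [sing_apply, h.ne], fun j hj => by simp [sing_apply, hj.ne, (hj.trans h).ne]⟩

lemma revLexLt_of_apply_zero_eq_zero {α σ : Expo (n + 1)} (hα : α 0 = 0)
    (h : σ 0 = 0 → α 1 < σ 1) : RevLexLt σ α := by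
  rcases Nat.eq_zero_or_pos (σ 0) with hσ | hσ
  · refine ⟨1, h hσ, fun j hj => ?_⟩
    rw [Fin.lt_one_iff] at hj
    rw [hj, hα, hσ]
  · exact ⟨0, by omega, fun j hj => absurd hj (Fin.not_lt_zero j)⟩

end Terms

section CurveIdeal

variable {m d B : ℕ}

@[simp]
lemma two_mod_add_three : 2 % (m + 2 + 1) = 2 :=
  Nat.mod_eq_of_lt (by omega)

lemma Fin.eq_zero_or_eq_one_or_eq_two_or_two_lt (i : Fin (m + 2 + 1)) :
    i = 0 ∨ i = 1 ∨ i = 2 ∨ 2 < (i : ℕ) := by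
  have h2 : ((2 : Fin (m + 2 + 1)) : ℕ) = 2 := by simp
  simp only [Fin.ext_iff, Fin.val_zero, Fin.val_one, h2]
  omega

def term3 (a b c : ℕ) : Expo (m + 2) := a • sing 0 + b • sing 1 + c • sing 2

@[simp]
lemma term3_apply_zero (a b c : ℕ) : term3 (m := m) a b c 0 = a := by
  simp [term3, sing_apply, Fin.ext_iff]

@[simp]
lemma term3_apply_one (a b c : ℕ) : term3 (m := m) a b c 1 = b := by
  simp [term3, sing_apply, Fin.ext_iff]

@[simp]
lemma term3_apply_two (a b c : ℕ) : term3 (m := m) a b c 2 = c := by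
  simp [term3, sing_apply, Fin.ext_iff]

lemma term3_apply_of_two_lt (a b c : ℕ) {i : Fin (m + 2 + 1)} (hi : 2 < (i : ℕ)) :
    term3 a b c i = 0 := by
  have : (i : ℕ) ≠ 0 ∧ (i : ℕ) ≠ 1 ∧ (i : ℕ) ≠ 2 := by omega
  simp [term3, sing_apply, Fin.ext_iff, this]

@[simp]
lemma deg_term3 (a b c : ℕ) : deg (term3 (m := m) a b c) = a + b + c := by
  simp only [term3, deg_add, deg_smul, deg_sing]
  ring

lemma term3_le_iff {a b c : ℕ} {α : Expo (m + 2)} :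
    term3 a b c ≤ α ↔ a ≤ α 0 ∧ b ≤ α 1 ∧ c ≤ α 2 := by
  refine ⟨fun h => ⟨by simpa using h 0, by simpa using h 1, by simpa using h 2⟩,
    fun ⟨h0, h1, h2⟩ i => ?_⟩
  rcases i.eq_zero_or_eq_one_or_eq_two_or_two_lt with rfl | rfl | rfl | hi
  · simpa using h0
  · simpa using h1
  · simpa using h2
  · simp [term3_apply_of_two_lt a b c hi]

lemma eq_term3 {α : Expo (m + 2)} (h : ∀ i : Fin (m + 2 + 1), 2 < (i : ℕ) → α i = 0) :
    α = term3 (α 0) (α 1) (α 2) := by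
  funext i
  rcases i.eq_zero_or_eq_one_or_eq_two_or_two_lt with rfl | rfl | rfl | hi
  · simp
  · simp
  · simp
  · rw [h i hi, term3_apply_of_two_lt _ _ _ hi]

variable (m d B) in
/-- The ideal `(x_3, …, x_n, x_2^{d+1}, x_1^B x_2^d)` of `K[x_0, …, x_{m+2}]`. -/
def curveIdeal : Set (Expo (m + 2)) :=
  {α | (∃ i : Fin (m + 2 + 1), 2 < (i : ℕ) ∧ 0 < α i) ∨
    d < α 2 ∨ (α 2 = d ∧ B ≤ α 1)}

lemma mem_curveIdeal {α : Expo (m + 2)} :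
    α ∈ curveIdeal m d B ↔
      (∃ i : Fin (m + 2 + 1), 2 < (i : ℕ) ∧ 0 < α i) ∨
        d < α 2 ∨ (α 2 = d ∧ B ≤ α 1) :=
  Iff.rfl

lemma term3_mem_curveIdeal {a b c : ℕ} :
    term3 a b c ∈ curveIdeal m d B ↔ d < c ∨ (c = d ∧ B ≤ b) := by
  simp only [mem_curveIdeal, term3_apply_one, term3_apply_two, or_iff_right_iff_imp]
  rintro ⟨i, hi, hpos⟩
  simp [term3_apply_of_two_lt a b c hi] at hpos

lemma not_mem_curveIdeal {σ : Expo (m + 2)} (hσ : σ ∉ curveIdeal m d B) :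
    σ = term3 (σ 0) (σ 1) (σ 2) ∧ σ 2 ≤ d ∧ (σ 2 = d → σ 1 < B) := by
  simp only [mem_curveIdeal, not_or, not_exists, not_and, not_lt] at hσ
  obtain ⟨hsupp, h2, h1⟩ := hσ
  exact ⟨eq_term3 fun i hi => Nat.le_zero.mp (hsupp i hi), h2, fun h => by simpa using h1 h⟩

lemma isMonIdeal_curveIdeal : IsMonIdeal (curveIdeal m d B) := by
  intro α hα γ
  simp only [mem_curveIdeal, Pi.add_apply] at hα ⊢
  rcases hα with ⟨i, hi, hpos⟩ | h2 | ⟨h2, h1⟩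
  · exact Or.inl ⟨i, hi, by omega⟩
  · exact Or.inr (Or.inl (by omega))
  · rcases Nat.eq_zero_or_pos (γ 2) with hγ | hγ
    · exact Or.inr (Or.inr ⟨by omega, by omega⟩)
    · exact Or.inr (Or.inl (by omega))

lemma isBorelSet_curveIdeal : IsBorelSet (curveIdeal m d B) := by
  intro α β hα hmove
  obtain ⟨j, k, hkj, hβj, hle⟩ := hmove.exists_index
  rw [mem_curveIdeal] at hα ⊢
  by_cases hk : 2 ≤ (k : ℕ)
  · -- a move out of `x_k` with `k ≥ 2` lands in some `x_j` with `j ≥ 3`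
    exact Or.inl ⟨j, by omega, by omega⟩
  rcases hα with ⟨i, hi, hpos⟩ | h2 | ⟨h2, h1⟩
  · exact Or.inl ⟨i, hi, (hle i (fun h => by subst h; omega)).trans_lt' hpos⟩
  · exact Or.inr (Or.inl ((hle 2 (fun h => by subst h; simp at hk)).trans_lt' h2))
  · have hβ2 := hle 2 (fun h => by subst h; simp at hk)
    by_cases hk1 : k = 1
    · have hj : j = 2 := by subst hk1; ext; simp at hkj ⊢; omega
      subst hj
      exact Or.inr (Or.inl (by omega))
    · rcases hβ2.lt_or_eq with hlt | heq
      · exact Or.inr (Or.inl (by omega))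
      · exact Or.inr (Or.inr ⟨by omega, h1.trans (hle 1 (Ne.symm hk1))⟩)

lemma isSaturatedIdeal_curveIdeal : IsSaturatedIdeal (curveIdeal m d B) := by
  intro α hsat
  obtain ⟨k, hk⟩ := hsat 0
  have hoff (i : Fin (m + 2 + 1)) (hi : i ≠ 0) : (α + k • sing 0 : Expo (m + 2)) i = α i := by
    simp [sing_apply, hi]
  rw [mem_curveIdeal, hoff 1 (by simp), hoff 2 (by simp [Fin.ext_iff])] at hk
  rcases hk with ⟨i, hi, hpos⟩ | hk
  · exact Or.inl ⟨i, hi, by rwa [hoff i (by rintro rfl; simp at hi)] at hpos⟩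
  · exact Or.inr hk

lemma isMinGen_curveIdeal_cases {α : Expo (m + 2)} (hα : IsMinGen (curveIdeal m d B) α) :
    (∃ i : Fin (m + 2 + 1), 2 < (i : ℕ) ∧ α = sing i) ∨
      α = term3 0 0 (d + 1) ∨ α = term3 0 B d := by
  rcases hα.1 with ⟨i, hi, hpos⟩ | h2 | ⟨h2, h1⟩
  · refine Or.inl ⟨i, hi, hα.eq_of_le (Or.inl ⟨i, hi, by simp [sing_apply]⟩) fun j => ?_⟩
    rw [sing_apply]
    split_ifs with hji
    · exact hji ▸ hpos
    · exact Nat.zero_le _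
  · exact Or.inr (Or.inl (hα.eq_of_le (term3_mem_curveIdeal.mpr (Or.inl (by omega)))
      (term3_le_iff.mpr ⟨Nat.zero_le _, Nat.zero_le _, h2⟩)))
  · exact Or.inr (Or.inr (hα.eq_of_le (term3_mem_curveIdeal.mpr (Or.inr ⟨rfl, le_rfl⟩))
      (term3_le_iff.mpr ⟨Nat.zero_le _, h1, h2.ge⟩)))

lemma isGenSegment_curveIdeal : IsGenSegment RevLexLt (curveIdeal m d B) := by
  intro α hα σ hdeg hσgen hσmin
  have hσI : σ ∉ curveIdeal m d B :=
    not_mem_of_not_mem_genBelow (by rwa [hdeg]) hσmin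
  obtain ⟨hσ, hσ2, hσ1⟩ := not_mem_curveIdeal hσI
  have hdegσ : deg σ = σ 0 + σ 1 + σ 2 := (congrArg deg hσ).trans (deg_term3 _ _ _)
  rcases isMinGen_curveIdeal_cases hα with ⟨i, hi, rfl⟩ | rfl | rfl
  · obtain ⟨l, rfl⟩ := eq_sing_of_deg_eq_one (hdeg.trans (deg_sing i))
    refine revLexLt_sing (Fin.lt_def.mpr ?_)
    by_contra! hl
    exact hσI (Or.inl ⟨l, by omega, by simp [sing_apply]⟩)
  -- in the two remaining cases the generator avoids `x_0`
  all_goals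
    refine revLexLt_of_apply_zero_eq_zero (by simp) fun h0 => ?_
    simp only [deg_term3] at hdeg
    simp only [term3_apply_one]
    omega

lemma two_mul_sum_range_sub {d t : ℕ} (ht : d ≤ t + 1) :
    2 * ((∑ j ∈ range d, (t + 1 - j) : ℕ) : ℚ) = d * (2 * t + 3 - d) := by
  induction d with
  | zero => simp
  | succ d ih =>
    rw [sum_range_succ, Nat.cast_add, mul_add, ih (by omega), Nat.cast_sub (by omega)]
    push_cast
    ring

lemma ncard_coIdeal_curveIdeal {t : ℕ} (ht : d + B ≤ t) :
    (coIdeal (curveIdeal m d B) t).ncard = ∑ j ∈ range d, (t + 1 - j) + B := by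
  -- a degree-`t` term `x_0^{t-j-k} x_1^k x_2^j` outside the ideal is recorded as `⟨j, k⟩`
  set F : Finset (Σ _ : ℕ, ℕ) :=
    (range (d + 1)).sigma fun j => range (if j < d then t + 1 - j else B)
  set φ : (Σ _ : ℕ, ℕ) → Expo (m + 2) := fun x => term3 (t - x.1 - x.2) x.2 x.1
  have hmemF (j k : ℕ) :
      (⟨j, k⟩ : Σ _ : ℕ, ℕ) ∈ F ↔
        j < d + 1 ∧ k < if j < d then t + 1 - j else B := by
    simp [F]
  have himage : coIdeal (curveIdeal m d B) t = φ '' F := by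
    ext σ
    constructor
    · rintro ⟨hdeg, hσI⟩
      obtain ⟨hσ, hσ2, hσ1⟩ := not_mem_curveIdeal hσI
      have hdegσ : σ 0 + σ 1 + σ 2 = t :=
        ((congrArg deg hσ).trans (deg_term3 _ _ _)).symm.trans hdeg
      refine ⟨⟨σ 2, σ 1⟩, (hmemF _ _).mpr ⟨by omega, ?_⟩, ?_⟩
      · split_ifs <;> omega
      · rw [hσ]
        simp only [φ, term3_apply_one, term3_apply_two]
        congr 1
        omega
    · rintro ⟨⟨j, k⟩, hx, rfl⟩
      rw [Finset.mem_coe, hmemF] at hx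
      refine ⟨?_, ?_⟩
      · simp only [φ, deg_term3]
        split_ifs at hx <;> omega
      · simp only [φ, term3_mem_curveIdeal]
        split_ifs at hx <;> omega
  have hinj : Set.InjOn φ F := by
    rintro ⟨j, k⟩ - ⟨j', k'⟩ - h
    have h1 : k = k' := by simpa [φ] using congrFun h 1
    have h2 : j = j' := by simpa [φ] using congrFun h 2
    subst h1 h2
    rfl
  rw [himage, hinj.ncard_image, Set.ncard_coe_finset, card_sigma, sum_range_succ]
  simp only [card_range, lt_irrefl, if_false]
  congr 1
  exact sum_congr rfl fun j hj => if_pos (mem_range.mp hj)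

lemma hasHilbPoly_curveIdeal {g : ℤ} (hB : 2 * (B : ℤ) = (d - 1) * (d - 2) - 2 * g) :
    HasHilbPoly (curveIdeal m d B) (C (d : ℚ) * X + C (1 - (g : ℚ))) := by
  refine ⟨d + B, fun t ht => ?_⟩
  have hsum := two_mul_sum_range_sub (d := d) (t := t) (by omega)
  have hBq : 2 * (B : ℚ) = (d - 1) * (d - 2) - 2 * g := by exact_mod_cast hB
  rw [ncard_coIdeal_curveIdeal ht, Nat.cast_add]
  simp only [eval_add, eval_mul, eval_C, eval_X]
  linear_combination (hsum + hBq) / 2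

end CurveIdeal

lemma exists_two_mul_eq_sub {d : ℕ} {g : ℤ} (hg : 2 * g ≤ ((d : ℤ) - 1) * ((d : ℤ) - 2)) :
    ∃ B : ℕ, 2 * (B : ℤ) = (d - 1) * (d - 2) - 2 * g := by
  obtain ⟨e, he⟩ : Even (((d : ℤ) - 1) * (d - 2) - 2 * g) := by
    have hprod : ((d : ℤ) - 1) * (d - 2) = (d - 2) * (d - 2 + 1) := by ring
    rw [hprod]
    exact (Int.even_mul_succ_self _).sub (even_two_mul g)
  exact ⟨e.toNat, by omega⟩

theorem exists_gen_segment_revlex_general (d : ℕ) (g : ℤ)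
    (hg : 2 * g ≤ ((d : ℤ) - 1) * ((d : ℤ) - 2))
    (n : ℕ) (hn : 2 ≤ n)
    (p : Polynomial ℚ)
    (hp : p = Polynomial.C (d : ℚ) * Polynomial.X + Polynomial.C (1 - (g : ℚ))) :
    ∃ I : Set (Expo n), IsBorelIdeal I ∧ IsSaturatedIdeal I ∧
      IsGenSegment RevLexLt I ∧ HasHilbPoly I p := by
  obtain ⟨m, rfl⟩ := Nat.exists_eq_add_of_le' hn
  obtain ⟨B, hB⟩ := exists_two_mul_eq_sub hg
  exact ⟨curveIdeal m d B, ⟨isMonIdeal_curveIdeal, isBorelSet_curveIdeal⟩,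
    isSaturatedIdeal_curveIdeal, isGenSegment_curveIdeal, hp ▸ hasHilbPoly_curveIdeal hB⟩

/-- Let `p(z) = dz + 1 - g` be admissible (`d ≥ 1`, `g ≤ (d-1)(d-2)/2`).
For every `n ≥ 2` there exists a saturated Borel ideal of `K[x_0,…,x_n]` which is a
gen-segment ideal w.r.t. the revlex order and has Hilbert polynomial `p`. -/
theorem exists_gen_segment_revlex (d : ℕ) (hd : 1 ≤ d) (g : ℤ)
    (hg : 2 * g ≤ ((d : ℤ) - 1) * ((d : ℤ) - 2))
    (n : ℕ) (hn : 2 ≤ n)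
    (p : Polynomial ℚ)
    (hp : p = Polynomial.C (d : ℚ) * Polynomial.X + Polynomial.C (1 - (g : ℚ))) :
    ∃ I : Set (Expo n), IsBorelIdeal I ∧ IsSaturatedIdeal I ∧
      IsGenSegment RevLexLt I ∧ HasHilbPoly I p :=
  exists_gen_segment_revlex_general d g hg n hn p hp
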